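/- arXiv:1610.09868 — 3 statements merged into one kernel-verified Lean document; each statement's English description precedes it below -/
import Mathlib

section
/- For fixed k ≥ 3, the maximum of t_n = (k/(k-n)) * C(k-n, n) over integers n with 1 ≤ n ≤ (k-1)/2 is attained at n = ⌈(5k - 4 - √(5k² - 4))/10⌉. -/
lemma choose_id (k j : ℕ) (h : 2*j+1 ≤ k) :
    (j+1) * (k-j) * Nat.choose (k-j-1) (j+1)
      = (k-2*j) * (k-2*j-1) * Nat.choose (k-j) j := by
  obtain ⟨a, rfl⟩ : ∃ a, k = 2*j+1+a := ⟨k - (2*j+1), by omega⟩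
  have e1 : 2*j+1+a - j = j+1+a := by omega
  have e3 : 2*j+1+a - 2*j = a+1 := by omega
  rw [e1, show j+1+a-1 = j+a by omega, e3, show a+1-1 = a by omega,
    show j+1+a = j+a+1 by omega]
  have h1 := Nat.choose_succ_right_eq (j+a) j
  have h2 := Nat.choose_mul_succ_eq (j+a) j
  rw [show j+a-j = a by omega] at h1
  rw [show j+a+1-j = a+1 by omega] at h2
  zify at h1 h2 ⊢
  linear_combination ((j:ℤ)+1+a) * h1 + (a:ℤ) * h2

set_option maxHeartbeats 2000000 in
theorem cyclic_facets_maximizer (k : ℕ) (hk : 3 ≤ k)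
    (t : ℕ → ℚ)
    (ht : ∀ m, t m = ((k : ℚ) / ((k : ℚ) - m)) * (Nat.choose (k - m) m : ℚ)) :
    ∀ n : ℕ, 1 ≤ n → 2 * n + 1 ≤ k →
      t n ≤ t (⌈(5 * (k : ℝ) - 4 - Real.sqrt (5 * (k : ℝ) ^ 2 - 4)) / 10⌉.toNat) := by
  set r : ℝ := Real.sqrt (5 * (k : ℝ) ^ 2 - 4) with hrdef
  have hk3 : (3:ℝ) ≤ (k:ℝ) := by exact_mod_cast hk
  have hr0 : 0 ≤ r := Real.sqrt_nonneg _
  have hr2 : r ^ 2 = 5 * (k:ℝ)^2 - 4 := Real.sq_sqrt (by nlinarith)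
  set α : ℝ := (5 * (k : ℝ) - 4 - r) / 10 with hαdef
  set β : ℝ := (5 * (k : ℝ) - 4 + r) / 10 with hβdef
  have hαβ : α ≤ β := by
    rw [hαdef, hβdef]; apply div_le_div_of_nonneg_right ?_ (by norm_num)
    · linarith
  have factored : ∀ x : ℝ,
      5*x^2 - (5*(k:ℝ)-4)*x + ((k:ℝ)-1)^2 = 5*(x-α)*(x-β) := by
    intro x
    rw [hαdef, hβdef]
    field_simp
    ring_nf
    nlinarith [hr2]
  have sgn1 : ∀ x : ℝ, x ≤ α → 0 ≤ 5*x^2 - (5*(k:ℝ)-4)*x + ((k:ℝ)-1)^2 := by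
    intro x hx
    rw [factored x]
    nlinarith [hαβ]
  have sgn2 : ∀ x : ℝ, α ≤ x → x ≤ β → 5*x^2 - (5*(k:ℝ)-4)*x + ((k:ℝ)-1)^2 ≤ 0 := by
    intro x h1 h2
    rw [factored x]
    nlinarith
  set b : ℕ := (k-1)/2 with hbdef
  have hb1 : 1 ≤ b := by omega
  have hb2 : 2*b + 1 ≤ k := by omega
  have hfb : 5*(b:ℝ)^2 - (5*(k:ℝ)-4)*(b:ℝ) + ((k:ℝ)-1)^2 < 0 := by
    have hcase : k = 2*b+1 ∨ k = 2*b+2 := by omega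
    have hbR : (1:ℝ) ≤ (b:ℝ) := by exact_mod_cast hb1
    rcases hcase with hc | hc
    · have : (k:ℝ) = 2*b+1 := by exact_mod_cast congrArg Nat.cast hc
      rw [this]; nlinarith
    · have : (k:ℝ) = 2*b+2 := by exact_mod_cast congrArg Nat.cast hc
      rw [this]; nlinarith
  have hαb : α < (b:ℝ) := by
    by_contra hcon
    push_neg at hcon
    have := factored (b:ℝ)
    nlinarith
  have hbβ : (b:ℝ) < β := by
    by_contra hcon
    push_neg at hcon
    have := factored (b:ℝ)
    nlinarith
  have hβ0 : 0 < β := by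
    rw [hβdef]
    apply div_pos ?_ (by norm_num)
    linarith
  have hα0 : 0 < α := by
    by_contra hcon
    push_neg at hcon
    have := sgn2 0 hcon hβ0.le
    nlinarith
  set m : ℤ := ⌈α⌉ with hmdef
  have hm1 : 1 ≤ m := by
    have := Int.lt_ceil.mpr (show ((0:ℤ):ℝ) < α by exact_mod_cast hα0)
    omega
  set M : ℕ := m.toNat with hMdef
  have hMm : (M:ℤ) = m := Int.toNat_of_nonneg (by omega)
  have hMR : (M:ℝ) = (m:ℝ) := by exact_mod_cast congrArg Int.cast hMm
  have hM1 : 1 ≤ M := by omega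
  have hαM : α ≤ (M:ℝ) := by rw [hMR]; exact Int.le_ceil α
  have hMα : (M:ℝ) - 1 < α := by
    rw [hMR]; have := Int.ceil_lt_add_one α; rw [← hmdef] at this; linarith
  have hMb : M ≤ b := by
    have : m ≤ (b:ℤ) := Int.ceil_le.mpr (by exact_mod_cast hαb.le)
    omega
  -- generic step computation
  have step : ∀ j : ℕ, 1 ≤ j → 2*j+3 ≤ k →
      ((((j:ℚ)+1) * ((k:ℚ)-j-1) ≤ ((k:ℚ)-2*j) * ((k:ℚ)-2*j-1) → t j ≤ t (j+1)) ∧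
       (((k:ℚ)-2*j) * ((k:ℚ)-2*j-1) ≤ ((j:ℚ)+1) * ((k:ℚ)-j-1) → t (j+1) ≤ t j)) := by
    intro j hj1 hjk
    have hA : 0 < (Nat.choose (k-j) j : ℚ) := by
      exact_mod_cast Nat.choose_pos (by omega : j ≤ k - j)
    have hI := choose_id k j (by omega)
    have hIQ : ((j:ℚ)+1) * ((k:ℚ)-j) * (Nat.choose (k-(j+1)) (j+1) : ℚ)
        = ((k:ℚ)-2*j) * ((k:ℚ)-2*j-1) * (Nat.choose (k-j) j : ℚ) := by
      have : (((j+1) * (k-j) * Nat.choose (k-j-1) (j+1) : ℕ) : ℚ)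
          = (((k-2*j) * (k-2*j-1) * Nat.choose (k-j) j : ℕ) : ℚ) := by
        exact_mod_cast congrArg Nat.cast hI
      push_cast [Nat.cast_sub (by omega : j ≤ k), Nat.cast_sub (by omega : 2*j ≤ k),
        Nat.cast_sub (by omega : 1 ≤ k - 2*j), Nat.cast_sub (by omega : 1 ≤ k - j),
        show k - j - 1 = k - (j+1) by omega] at this
      linarith [this]
    have hd1 : (0:ℚ) < (k:ℚ) - j := by
      have : (j:ℚ) < (k:ℚ) := by exact_mod_cast (by omega : j < k)
      linarith
    have hd2 : (0:ℚ) < (k:ℚ) - j - 1 := by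
      have : ((j:ℚ)+1) < (k:ℚ) := by exact_mod_cast (by omega : j+1 < k)
      linarith
    have hkpos : (0:ℚ) < (k:ℚ) := by exact_mod_cast (by omega : 0 < k)
    have hjpos : (0:ℚ) < (j:ℚ)+1 := by positivity
    have hne1 : (k:ℚ) - (j:ℚ) ≠ 0 := ne_of_gt hd1
    have hne2 : (k:ℚ) - (j:ℚ) - 1 ≠ 0 := ne_of_gt hd2
    have hne3 : (k:ℚ) - ((j:ℚ)+1) ≠ 0 := by intro hc; apply hne2; linarith
    set D : ℚ := ((j:ℚ)+1) * ((k:ℚ)-j) * ((k:ℚ)-j-1) with hD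
    have hDpos : 0 < D := by rw [hD]; positivity
    have e1 : t j * D = (k:ℚ) * (Nat.choose (k-j) j : ℚ) * (((j:ℚ)+1) * ((k:ℚ)-j-1)) := by
      rw [ht j, hD]
      field_simp
    have e2 : t (j+1) * D
        = (k:ℚ) * (Nat.choose (k-j) j : ℚ) * (((k:ℚ)-2*j) * ((k:ℚ)-2*j-1)) := by
      have h0 : t (j+1) * D
          = (k:ℚ) * (((j:ℚ)+1) * ((k:ℚ)-(j:ℚ)) * (Nat.choose (k-(j+1)) (j+1) : ℚ)) := by
        rw [ht (j+1), hD]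
        rw [show ((j+1 : ℕ):ℚ) = (j:ℚ)+1 by push_cast; ring]
        field_simp
        ring
      rw [h0, hIQ]
      ring
    have hkA : (0:ℚ) < (k:ℚ) * (Nat.choose (k-j) j : ℚ) := by positivity
    constructor
    · intro hle
      have h2 : t j * D ≤ t (j+1) * D := by
        rw [e1, e2]
        exact mul_le_mul_of_nonneg_left hle hkA.le
      exact le_of_mul_le_mul_right h2 hDpos
    · intro hle
      have h2 : t (j+1) * D ≤ t j * D := by
        rw [e1, e2]
        exact mul_le_mul_of_nonneg_left hle hkA.le
      exact le_of_mul_le_mul_right h2 hDpos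
  -- transport sign information to ℚ
  have signQ1 : ∀ j : ℕ, 0 ≤ 5*(j:ℝ)^2 - (5*(k:ℝ)-4)*(j:ℝ) + ((k:ℝ)-1)^2 →
      ((j:ℚ)+1) * ((k:ℚ)-j-1) ≤ ((k:ℚ)-2*j) * ((k:ℚ)-2*j-1) := by
    intro j h
    have hq : (0:ℚ) ≤ 5*(j:ℚ)^2 - (5*(k:ℚ)-4)*(j:ℚ) + ((k:ℚ)-1)^2 := by
      exact_mod_cast h
    nlinarith [hq]
  have signQ2 : ∀ j : ℕ, 5*(j:ℝ)^2 - (5*(k:ℝ)-4)*(j:ℝ) + ((k:ℝ)-1)^2 ≤ 0 →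
      ((k:ℚ)-2*j) * ((k:ℚ)-2*j-1) ≤ ((j:ℚ)+1) * ((k:ℚ)-j-1) := by
    intro j h
    have hq : 5*(j:ℚ)^2 - (5*(k:ℚ)-4)*(j:ℚ) + ((k:ℚ)-1)^2 ≤ 0 := by
      exact_mod_cast h
    nlinarith [hq]
  have up : ∀ j : ℕ, 1 ≤ j → j + 1 ≤ M → t j ≤ t (j+1) := by
    intro j hj1 hjM
    have hjk : 2*j+3 ≤ k := by omega
    have hjα : (j:ℝ) ≤ α := by
      have : (j:ℝ) + 1 ≤ (M:ℝ) := by exact_mod_cast hjM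
      linarith [hMα]
    exact (step j hj1 hjk).1 (signQ1 j (sgn1 _ hjα))
  have down : ∀ j : ℕ, 1 ≤ j → M ≤ j → j + 1 ≤ b → t (j+1) ≤ t j := by
    intro j hj1 hMj hjb
    have hjk : 2*j+3 ≤ k := by omega
    have hjα : α ≤ (j:ℝ) := le_trans hαM (by exact_mod_cast hMj)
    have hjβ : (j:ℝ) ≤ β := by
      have : (j:ℝ) + 1 ≤ (b:ℝ) := by exact_mod_cast hjb
      linarith [hbβ]
    exact (step j hj1 hjk).2 (signQ2 j (sgn2 _ hjα hjβ))
  intro n hn1 hnk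
  have hnb : n ≤ b := by omega
  rcases le_total n M with h | h
  · have chain : ∀ d : ℕ, n + d ≤ M → t n ≤ t (n + d) := by
      intro d
      induction d with
      | zero => intro _; simp
      | succ d ih =>
        intro hd
        have h1 : n + d ≤ M := by omega
        calc t n ≤ t (n+d) := ih h1
          _ ≤ t (n+d+1) := up (n+d) (by omega) (by omega)
    have := chain (M - n) (by omega)
    rwa [show n + (M - n) = M by omega] at this
  · have chain : ∀ d : ℕ, M + d ≤ b → t (M + d) ≤ t M := by
      intro d
      induction d with
      | zero => intro _; simp
      | succ d ih =>
        intro hd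
        have h1 : M + d ≤ b := by omega
        calc t (M+d+1) ≤ t (M+d) := down (M+d) (by omega) (by omega) (by omega)
          _ ≤ t M := ih h1
    have := chain (n - M) (by omega)
    rwa [show M + (n - M) = n by omega] at this
end

section
/- There do not exist complex numbers z₁, z₂, z₃, z₄, z₅, z₆ satisfying all of: z₁ - z₃z₄ + 1 = 0 with |z₁|² - |z₃z₄|² + 1 = 0; z₄ - z₁z₂ + 1 = 0 with |z₄|² - |z₁z₂|² + 1 = 0; and z₂ - z₄z₅ + 1 = 0 with |z₂|² - |z₄z₅|² + 1 = 0. -/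
/-!
Each pair of equations has the shape `w = z + 1`, `‖w‖² = ‖z‖² + 1`; since
`‖z + 1‖² = ‖z‖² + 2 Re z + 1`, this forces `Re z = 0`. So `z₁`, `z₂`, `z₄` are purely
imaginary. Then `z₁ z₂` is real, hence so is `z₄ = z₁ z₂ - 1`, and being also imaginary
`z₄ = 0`. The first equation now gives `z₁ = -1`, which is not purely imaginary.
-/

namespace Complex

lemma re_eq_zero_of_sub_add_one_eq_zero {z w : ℂ} (h : z - w + 1 = 0)
    (hn : ‖z‖ ^ 2 - ‖w‖ ^ 2 + 1 = 0) : z.re = 0 := by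
  obtain rfl : w = z + 1 := by linear_combination -h
  simp only [Complex.sq_norm, normSq_apply, add_re, add_im, one_re, one_im] at hn
  linarith

lemma im_mul_eq_zero_of_re_eq_zero {a b : ℂ} (ha : a.re = 0) (hb : b.re = 0) :
    (a * b).im = 0 := by
  simp [mul_im, ha, hb]

end Complex

open Complex in
theorem pentagon_not_cpsd_minimal :
    ¬ ∃ z₁ z₂ z₃ z₄ z₅ z₆ : ℂ,
      (z₁ - z₃ * z₄ + 1 = 0 ∧ ‖z₁‖ ^ 2 - ‖z₃ * z₄‖ ^ 2 + 1 = 0) ∧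
      (z₄ - z₁ * z₂ + 1 = 0 ∧ ‖z₄‖ ^ 2 - ‖z₁ * z₂‖ ^ 2 + 1 = 0) ∧
      (z₂ - z₄ * z₅ + 1 = 0 ∧ ‖z₂‖ ^ 2 - ‖z₄ * z₅‖ ^ 2 + 1 = 0) := by
  rintro ⟨z₁, z₂, z₃, z₄, z₅, -, ⟨h₁, hn₁⟩, ⟨h₄, hn₄⟩, ⟨h₂, hn₂⟩⟩
  have hre₁ := re_eq_zero_of_sub_add_one_eq_zero h₁ hn₁
  have hre₂ := re_eq_zero_of_sub_add_one_eq_zero h₂ hn₂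
  have hre₄ := re_eq_zero_of_sub_add_one_eq_zero h₄ hn₄
  have hz₄ : z₄ = 0 := by
    refine Complex.ext hre₄ ?_
    have him := congrArg im h₄
    simp only [add_im, sub_im, one_im, zero_im, im_mul_eq_zero_of_re_eq_zero hre₁ hre₂] at him
    simpa using him
  have hz₁ : z₁ = -1 := by linear_combination h₁ + z₃ * hz₄
  norm_num [hz₁] at hre₁
end

section
/- The 6×6 complex matrix M with rows (0,0,1,√2,√2,1), (1,0,0,1,1-i,√2), (1+i,1,0,0,1,√2 i), (√2 i,√2 i,-1,0,0,-1), (1,1+i,√2 i,1,0,0), (0,1,√2,1-i,1,0) has rank 3, and its entrywise squared modulus |M|⊙|M| equals the slack matrix of the regular hexagon, the circulant-type matrix with rows (0,0,1,2,2,1), (1,0,0,1,2,2), (2,1,0,0,1,2), (2,2,1,0,0,1), (1,2,2,1,0,0), (0,1,2,2,1,0). -/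
/-!
The rank of `M` is pinned down from both sides. Its last three rows are explicit `ℂ`-linear
combinations of its first three, so `M` factors through `ℂ³` and has rank at most `3`; its leading
`3 × 3` minor has determinant `1`, so the rank is at least `3`. The entrywise identity
`|M_ij|² = S_ij` is a direct computation, all nonzero entries being of modulus `1` or `√2`.
-/

open Complex

namespace Matrix

theorem card_le_rank_of_isUnit_det_submatrix {m n k R : Type*} [Fintype n] [Fintype k]
    [DecidableEq k] [CommRing R] [StrongRankCondition R] (A : Matrix m n R) (r : k → m)
    (c : k → n) (h : IsUnit (A.submatrix r c).det) : Fintype.card k ≤ A.rank :=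
  calc Fintype.card k = (A.submatrix r c).rank :=
        ((A.submatrix r c).rank_of_isUnit ((isUnit_iff_isUnit_det _).mpr h)).symm
    _ ≤ A.rank := A.rank_submatrix_le r c

end Matrix

noncomputable def hexagonHadamardSqrt : Matrix (Fin 6) (Fin 6) ℂ :=
  !![0, 0, 1, (Real.sqrt 2 : ℂ), (Real.sqrt 2 : ℂ), 1;
     1, 0, 0, 1, 1 - I, (Real.sqrt 2 : ℂ);
     1 + I, 1, 0, 0, 1, (Real.sqrt 2 : ℂ) * I;
     (Real.sqrt 2 : ℂ) * I, (Real.sqrt 2 : ℂ) * I, -1, 0, 0, -1;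
     1, 1 + I, (Real.sqrt 2 : ℂ) * I, 1, 0, 0;
     0, 1, (Real.sqrt 2 : ℂ), 1 - I, 1, 0]

noncomputable def hexagonRowCoeffs : Matrix (Fin 6) (Fin 3) ℂ :=
  !![1, 0, 0;
     0, 1, 0;
     0, 0, 1;
     -1, (Real.sqrt 2 : ℂ), (Real.sqrt 2 : ℂ) * I;
     (Real.sqrt 2 : ℂ) * I, 1 - 2 * I, 1 + I;
     (Real.sqrt 2 : ℂ), -1 - I, 1]

theorem hexagonHadamardSqrt_eq_rowCoeffs_mul :
    hexagonHadamardSqrt =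
      hexagonRowCoeffs * hexagonHadamardSqrt.submatrix (Fin.castLE (by norm_num : 3 ≤ 6)) id := by
  have hsqrt : ((Real.sqrt 2 : ℝ) : ℂ) ^ 2 = 2 := by
    rw [← ofReal_pow, Real.sq_sqrt zero_le_two, ofReal_ofNat]
  ext i j
  fin_cases i <;> fin_cases j <;>
    simp [hexagonHadamardSqrt, hexagonRowCoeffs, Matrix.mul_apply, Fin.sum_univ_three] <;>
    ring_nf <;> simp [hsqrt] <;> ring_nf

theorem det_hexagonHadamardSqrt_leadingMinor :
    (hexagonHadamardSqrt.submatrix (Fin.castLE (by norm_num : 3 ≤ 6))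
      (Fin.castLE (by norm_num : 3 ≤ 6))).det = 1 := by
  simp [hexagonHadamardSqrt, Matrix.det_fin_three]

theorem rank_hexagonHadamardSqrt : hexagonHadamardSqrt.rank = 3 := by
  refine le_antisymm ?_ ?_
  · rw [hexagonHadamardSqrt_eq_rowCoeffs_mul]
    exact (Matrix.rank_mul_le_left _ _).trans (Matrix.rank_le_width _)
  · calc 3 = Fintype.card (Fin 3) := (Fintype.card_fin 3).symm
      _ ≤ hexagonHadamardSqrt.rank :=
        hexagonHadamardSqrt.card_le_rank_of_isUnit_det_submatrix _ _
          (det_hexagonHadamardSqrt_leadingMinor ▸ isUnit_one)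

theorem hexagon_cpsd_minimal_certificate :
    let M : Matrix (Fin 6) (Fin 6) ℂ :=
      !![0, 0, 1, (Real.sqrt 2 : ℂ), (Real.sqrt 2 : ℂ), 1;
         1, 0, 0, 1, 1 - Complex.I, (Real.sqrt 2 : ℂ);
         1 + Complex.I, 1, 0, 0, 1, (Real.sqrt 2 : ℂ) * Complex.I;
         (Real.sqrt 2 : ℂ) * Complex.I, (Real.sqrt 2 : ℂ) * Complex.I, -1, 0, 0, -1;
         1, 1 + Complex.I, (Real.sqrt 2 : ℂ) * Complex.I, 1, 0, 0;
         0, 1, (Real.sqrt 2 : ℂ), 1 - Complex.I, 1, 0]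
    let S : Matrix (Fin 6) (Fin 6) ℝ :=
      !![0, 0, 1, 2, 2, 1;
         1, 0, 0, 1, 2, 2;
         2, 1, 0, 0, 1, 2;
         2, 2, 1, 0, 0, 1;
         1, 2, 2, 1, 0, 0;
         0, 1, 2, 2, 1, 0]
    M.rank = 3 ∧ ∀ i j, ‖M i j‖ ^ 2 = S i j := by
  intro M S
  refine ⟨rank_hexagonHadamardSqrt, fun i j => ?_⟩
  fin_cases i <;> fin_cases j <;> simp [M, S, Complex.sq_norm, Complex.normSq_apply] <;> norm_num
end
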